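/- Let f ∈ C(S^d) and suppose the m-point positive-weight quadrature rule {(w_j, x_j)}_{j=1}^m satisfies the Marcinkiewicz–Zygmund property with constant η ∈ [0,1) for degree n, and additionally integrates constants exactly, i.e., Σ_{j=1}^m w_j = |S^d|. Then ‖U_n f‖_{L²} ≤ √(1+η) |S^d|^{1/2} ‖f‖_∞ and ‖U_n f − f‖_{L²} ≤ (√(1+η)+1)|S^d|^{1/2} E_n(f) + √(η²+4η) ‖χ*‖_{L²}, where χ* ∈ P_n(S^d) satisfies ‖f − χ*‖_∞ = E_n(f). -/

import Mathlib

open MeasureTheory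

noncomputable section

/-- `Z(d,ℓ) = (2ℓ+d−1)·Γ(ℓ+d−1)/(Γ(d)·Γ(ℓ+1))`, the number of linearly independent
real spherical harmonics of exact degree `ℓ` on `S^d`. -/
def Zdim (d ℓ : ℕ) : ℕ :=
  (2 * ℓ + d - 1) * Nat.factorial (ℓ + d - 2) / (Nat.factorial (d - 1) * Nat.factorial ℓ)

/-- The unit sphere `S^d = {x ∈ ℝ^{d+1} : ‖x‖₂ = 1}`. -/
abbrev Sph (d : ℕ) : Type :=
  Metric.sphere (0 : EuclideanSpace ℝ (Fin (d + 1))) 1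

/-- The surface measure `ω_d` on `S^d`: the `d`-dimensional Hausdorff measure. -/
def sphMeasure (d : ℕ) : Measure (Sph d) :=
  MeasureTheory.Measure.hausdorffMeasure (d : ℝ)

/-- The surface area `|S^d| = ∫_{S^d} dω_d`. -/
def surfArea (d : ℕ) : ℝ := (sphMeasure d Set.univ).toReal

/-- `Y : S^d → ℝ` is a spherical harmonic of degree `ℓ`: the restriction to the sphere
of a harmonic polynomial on `ℝ^{d+1}` which is homogeneous of degree `ℓ`. -/
def IsSphericalHarmonic (d ℓ : ℕ) (Y : Sph d → ℝ) : Prop :=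
  ∃ p : MvPolynomial (Fin (d + 1)) ℝ,
    p.IsHomogeneous ℓ ∧
    (∑ i, MvPolynomial.pderiv i (MvPolynomial.pderiv i p)) = 0 ∧
    ∀ x : Sph d, Y x = MvPolynomial.eval (fun i => (x : EuclideanSpace ℝ (Fin (d + 1))) i) p

/-- A complete `L²(ω_d)`-orthonormal system `{Y_{ℓ,k} : k = 1,…,Z(d,ℓ); ℓ = 0,1,2,…}`
of real spherical harmonics on `S^d`. -/
structure SHSetup (d : ℕ) where
  Y : (ℓ : ℕ) → Fin (Zdim d ℓ) → Sph d → ℝ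
  harmonic : ∀ ℓ k, IsSphericalHarmonic d ℓ (Y ℓ k)
  orthonormal : ∀ (ℓ ℓ' : ℕ) (k : Fin (Zdim d ℓ)) (k' : Fin (Zdim d ℓ')),
    ∫ x, Y ℓ k x * Y ℓ' k' x ∂(sphMeasure d) =
      if ℓ = ℓ' ∧ (k : ℕ) = (k' : ℕ) then 1 else 0
  complete : ∀ f : Sph d → ℝ, MemLp f 2 (sphMeasure d) →
    (∀ ℓ k, ∫ x, f x * Y ℓ k x ∂(sphMeasure d) = 0) → f =ᵐ[sphMeasure d] 0

variable {d : ℕ}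

/-- Laplace–Fourier coefficient `f̂_{ℓ,k} = ∫_{S^d} f·Y_{ℓ,k} dω_d`. -/
def coef (S : SHSetup d) (f : Sph d → ℝ) (ℓ : ℕ) (k : Fin (Zdim d ℓ)) : ℝ :=
  ∫ x, f x * S.Y ℓ k x ∂(sphMeasure d)

/-- Membership in `P_n(S^d) = span{Y_{ℓ,k} : ℓ ≤ n}`. -/
def inPn (S : SHSetup d) (n : ℕ) (χ : Sph d → ℝ) : Prop :=
  ∃ c : (ℓ : ℕ) → Fin (Zdim d ℓ) → ℝ,
    χ = fun x => ∑ ℓ ∈ Finset.range (n + 1), ∑ k, c ℓ k * S.Y ℓ k x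

/-- `⟨f,g⟩ = ∫_{S^d} f g dω_d`. -/
def innerL2 (d : ℕ) (f g : Sph d → ℝ) : ℝ := ∫ x, f x * g x ∂(sphMeasure d)

/-- `‖f‖²_{L²}`. -/
def l2NormSq (d : ℕ) (f : Sph d → ℝ) : ℝ := ∫ x, f x ^ 2 ∂(sphMeasure d)

/-- `‖f‖_{L²}`. -/
def l2Norm (d : ℕ) (f : Sph d → ℝ) : ℝ := Real.sqrt (l2NormSq d f)

/-- `‖f‖_∞ = sup_{x ∈ S^d} |f(x)|`. -/
def supNorm (d : ℕ) (f : Sph d → ℝ) : ℝ := ⨆ x : Sph d, |f x|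

/-- The (unfettered) hyperinterpolant
`U_n f = Σ_{ℓ=0}^n Σ_{k} ⟨f, Y_{ℓ,k}⟩_m Y_{ℓ,k}`, where
`⟨f,g⟩_m = Σ_{j=1}^m w_j f(x_j) g(x_j)`. -/
def hyper (S : SHSetup d) (n m : ℕ) (w : Fin m → ℝ) (pts : Fin m → Sph d)
    (f : Sph d → ℝ) : Sph d → ℝ := fun x =>
  ∑ ℓ ∈ Finset.range (n + 1), ∑ k,
    (∑ j, w j * f (pts j) * S.Y ℓ k (pts j)) * S.Y ℓ k x

/-- Marcinkiewicz–Zygmund property with constant `η` for degree `n`: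
`|Σ_j w_j χ(x_j)² − ∫ χ² dω_d| ≤ η ∫ χ² dω_d` for all `χ ∈ P_n(S^d)`. -/
def MZProperty (S : SHSetup d) (n m : ℕ) (w : Fin m → ℝ) (pts : Fin m → Sph d)
    (η : ℝ) : Prop :=
  ∀ χ : Sph d → ℝ, inPn S n χ →
    |∑ j, w j * χ (pts j) ^ 2 - ∫ x, χ x ^ 2 ∂(sphMeasure d)| ≤
      η * ∫ x, χ x ^ 2 ∂(sphMeasure d)

/-- `E_n(f) = inf_{χ ∈ P_n} ‖f − χ‖_∞`, the best uniform approximation error. -/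
def bestUnifErr (S : SHSetup d) (n : ℕ) (f : Sph d → ℝ) : ℝ :=
  sInf {e : ℝ | ∃ χ : Sph d → ℝ, inPn S n χ ∧ e = supNorm d fun x => f x - χ x}

/-- `‖f‖²_{H^s} = Σ_ℓ Σ_k (a_ℓ)⁻¹ |f̂_{ℓ,k}|²`. -/
def sobNormSq (S : SHSetup d) (a : ℕ → ℝ) (f : Sph d → ℝ) : ℝ :=
  ∑' ℓ : ℕ, ∑ k, (a ℓ)⁻¹ * coef S f ℓ k ^ 2

/-- The Sobolev norm `‖f‖_{H^s}` associated with the normalizing sequence `a`. -/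
def sobNorm (S : SHSetup d) (a : ℕ → ℝ) (f : Sph d → ℝ) : ℝ :=
  Real.sqrt (sobNormSq S a f)

/-- Membership in the Sobolev space `H^s(S^d)` (w.r.t. the normalizing sequence `a`). -/
def memHs (S : SHSetup d) (a : ℕ → ℝ) (f : Sph d → ℝ) : Prop :=
  MemLp f 2 (sphMeasure d) ∧ Summable fun ℓ : ℕ => ∑ k, (a ℓ)⁻¹ * coef S f ℓ k ^ 2

/-- The sequence `a` is a valid normalizing sequence for `H^s`: positive and
`a_ℓ ≍ (1+ℓ)^{−2s}`. -/
def IsNormSeq (s : ℝ) (a : ℕ → ℝ) : Prop :=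
  (∀ ℓ, 0 < a ℓ) ∧ ∃ c₁ c₂ : ℝ, 0 < c₁ ∧ 0 < c₂ ∧ ∀ ℓ : ℕ,
    c₁ * (1 + (ℓ : ℝ)) ^ (-(2 * s)) ≤ a ℓ ∧ a ℓ ≤ c₂ * (1 + (ℓ : ℝ)) ^ (-(2 * s))

/-- `x_1,…,x_m` is a QMC design for `H^s(S^d)` with constant `c`:
`|(1/m) Σ_j f(x_j) − ∫ f dω_d| ≤ c·m^{−s/d}·‖f‖_{H^s}` for all `f ∈ H^s(S^d)`. -/
def IsQMCDesign (S : SHSetup d) (s : ℝ) (a : ℕ → ℝ) (m : ℕ)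
    (pts : Fin m → Sph d) (c : ℝ) : Prop :=
  ∀ f : Sph d → ℝ, Continuous f → memHs S a f →
    |(1 / (m : ℝ)) * ∑ j, f (pts j) - ∫ x, f x ∂(sphMeasure d)| ≤
      c * (m : ℝ) ^ (-(s / (d : ℝ))) * sobNorm S a f

/-- The `L²`-orthogonal projection `P_n f = Σ_{ℓ=0}^n Σ_k ⟨f,Y_{ℓ,k}⟩ Y_{ℓ,k}`. -/
def projL2 (S : SHSetup d) (n : ℕ) (f : Sph d → ℝ) : Sph d → ℝ := fun x =>
  ∑ ℓ ∈ Finset.range (n + 1), ∑ k, coef S f ℓ k * S.Y ℓ k x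

/-- `E_n(f; H^s) = inf_{χ ∈ P_n} ‖f − χ‖_{H^s}`. -/
def bestHsErr (S : SHSetup d) (a : ℕ → ℝ) (n : ℕ) (f : Sph d → ℝ) : ℝ :=
  sInf {e : ℝ | ∃ χ : Sph d → ℝ, inPn S n χ ∧ e = sobNorm S a fun x => f x - χ x}

/-!
The hyperinterpolant reproduces `P_n` against the discrete inner product:
`⟨U_n g, p⟩ = ⟨g, p⟩_m` for `p ∈ P_n`. Hence `‖U_n g‖² = ⟨g, U_n g⟩_m ≤ ‖g‖_m ‖U_n g‖_m`, and the
MZ property `‖U_n g‖_m² ≤ (1+η)‖U_n g‖²` gives `‖U_n g‖² ≤ (1+η)‖g‖_m² ≤ (1+η)|S^d|‖g‖_∞²`,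
using `Σ_j w_j = |S^d|`. For `p ∈ P_n` this yields `‖U_n p‖² ≤ (1+η)²‖p‖²`, while
`⟨U_n p, p⟩ = ‖p‖_m² ≥ (1-η)‖p‖²`; expanding the square, `‖U_n p - p‖² ≤ (η² + 4η)‖p‖²`.
The second estimate follows from `U_n f - f = U_n (f - χ*) + (U_n χ* - χ*) - (f - χ*)`.
-/

open Finset

lemma Zdim_zero (hd : 2 ≤ d) : Zdim d 0 = 1 := by
  obtain ⟨e, rfl⟩ := Nat.exists_eq_add_of_le' hd
  simp [Zdim, Nat.factorial_succ, Nat.div_self, Nat.factorial_pos]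

lemma IsSphericalHarmonic.exists_eq_const {Y : Sph d → ℝ} (hY : IsSphericalHarmonic d 0 Y) :
    ∃ C, ∀ x, Y x = C := by
  obtain ⟨p, hp, -, hY⟩ := hY
  rw [← MvPolynomial.totalDegree_zero_iff_isHomogeneous,
    MvPolynomial.totalDegree_eq_zero_iff_eq_C] at hp
  exact ⟨_, fun x => by rw [hY x, hp, MvPolynomial.eval_C]⟩

namespace SHSetup

/-- `ω_d` is finite because the constant harmonic `Y_{0,0}` has square integral `1`. -/
lemma isFiniteMeasure_sphMeasure (S : SHSetup d) (hd : 2 ≤ d) :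
    IsFiniteMeasure (sphMeasure d) := by
  let k₀ : Fin (Zdim d 0) := ⟨0, by rw [Zdim_zero hd]; exact one_pos⟩
  obtain ⟨C, hC⟩ := (S.harmonic 0 k₀).exists_eq_const
  have hnorm : ∫ _ : Sph d, C * C ∂(sphMeasure d) = 1 := by
    simpa [hC] using S.orthonormal 0 0 k₀ k₀
  have hint : Integrable (fun _ : Sph d => C * C) (sphMeasure d) := by
    by_contra h
    rw [integral_undef h] at hnorm
    exact zero_ne_one hnorm
  exact (integrable_const_iff.mp hint).resolve_left fun h0 => by simp [h0] at hnorm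

variable (S : SHSetup d)

lemma continuous_Y (ℓ : ℕ) (k : Fin (Zdim d ℓ)) : Continuous (S.Y ℓ k) := by
  obtain ⟨p, -, -, hp⟩ := S.harmonic ℓ k
  rw [funext hp]
  exact (MvPolynomial.continuous_eval p).comp
    (continuous_pi fun i => (EuclideanSpace.proj i).continuous.comp continuous_subtype_val)

def series (n : ℕ) (c : (ℓ : ℕ) → Fin (Zdim d ℓ) → ℝ) : Sph d → ℝ :=
  fun x => ∑ ℓ ∈ range (n + 1), ∑ k, c ℓ k * S.Y ℓ k x

lemma continuous_series (n : ℕ) (c : (ℓ : ℕ) → Fin (Zdim d ℓ) → ℝ) :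
    Continuous (S.series n c) :=
  continuous_finsetSum _ fun ℓ _ => continuous_finsetSum _ fun k _ =>
    continuous_const.mul (S.continuous_Y ℓ k)

lemma continuous_of_inPn {n : ℕ} {χ : Sph d → ℝ} (hχ : inPn S n χ) : Continuous χ := by
  obtain ⟨c, rfl⟩ := hχ
  exact S.continuous_series n c

variable [IsFiniteMeasure (sphMeasure d)]

lemma integral_mul_series {h : Sph d → ℝ} (hh : Continuous h) (n : ℕ)
    (c : (ℓ : ℕ) → Fin (Zdim d ℓ) → ℝ) :
    ∫ x, h x * S.series n c x ∂(sphMeasure d) = ∑ ℓ ∈ range (n + 1), ∑ k, c ℓ k * coef S h ℓ k := by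
  have hint (ℓ : ℕ) (k : Fin (Zdim d ℓ)) :
      Integrable (fun x => h x * (c ℓ k * S.Y ℓ k x)) (sphMeasure d) :=
    (hh.mul (continuous_const.mul (S.continuous_Y ℓ k))).integrable_of_hasCompactSupport
      (.of_compactSpace _)
  simp only [series, mul_sum, coef]
  rw [integral_finsetSum _ fun ℓ _ => integrable_finsetSum _ fun k _ => hint ℓ k]
  refine sum_congr rfl fun ℓ _ => ?_
  rw [integral_finsetSum _ fun k _ => hint ℓ k]
  refine sum_congr rfl fun k _ => ?_
  rw [← integral_const_mul]
  congr 1 with x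
  ring

lemma coef_series {n ℓ : ℕ} (hℓ : ℓ ≤ n) (c : (ℓ : ℕ) → Fin (Zdim d ℓ) → ℝ)
    (k : Fin (Zdim d ℓ)) : coef S (S.series n c) ℓ k = c ℓ k := by
  have hcomm : coef S (S.series n c) ℓ k = ∫ x, S.Y ℓ k x * S.series n c x ∂(sphMeasure d) := by
    simp only [coef, mul_comm]
  rw [hcomm, S.integral_mul_series (S.continuous_Y ℓ k),
    sum_eq_single_of_mem ℓ (mem_range.mpr (Nat.lt_succ_of_le hℓ))]
  · simp [coef, S.orthonormal, Fin.val_inj]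
  · intro ℓ' _ hne
    simp [coef, S.orthonormal, Ne.symm hne]

end SHSetup

section DiscreteInner

variable {X : Type*} {m : ℕ} (w : Fin m → ℝ) (pts : Fin m → X)

def discInner (g h : X → ℝ) : ℝ := ∑ j, w j * g (pts j) * h (pts j)

lemma discInner_self (g : X → ℝ) : discInner w pts g g = ∑ j, w j * g (pts j) ^ 2 :=
  sum_congr rfl fun _ _ => by ring

variable {w}

lemma discInner_self_nonneg (hw : ∀ j, 0 ≤ w j) (g : X → ℝ) : 0 ≤ discInner w pts g g := by
  rw [discInner_self]
  exact sum_nonneg fun j _ => mul_nonneg (hw j) (sq_nonneg _)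

lemma discInner_sq_le (hw : ∀ j, 0 ≤ w j) (g h : X → ℝ) :
    discInner w pts g h ^ 2 ≤ discInner w pts g g * discInner w pts h h :=
  sum_sq_le_sum_mul_sum_of_sq_le_mul _
    (fun j _ => by rw [mul_assoc]; exact mul_nonneg (hw j) (mul_self_nonneg _))
    (fun j _ => by rw [mul_assoc]; exact mul_nonneg (hw j) (mul_self_nonneg _))
    (fun _ _ => le_of_eq (by ring))

lemma discInner_self_le_of_abs_le (hw : ∀ j, 0 ≤ w j) {g : X → ℝ} {M : ℝ} (hg : ∀ x, |g x| ≤ M) :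
    discInner w pts g g ≤ (∑ j, w j) * M ^ 2 := by
  rw [discInner_self, sum_mul]
  refine sum_le_sum fun j _ => mul_le_mul_of_nonneg_left ?_ (hw j)
  rw [← sq_abs]
  exact pow_le_pow_left₀ (abs_nonneg _) (hg _) 2

end DiscreteInner

lemma SHSetup.discInner_series (S : SHSetup d) {m : ℕ} (w : Fin m → ℝ) (pts : Fin m → Sph d)
    (g : Sph d → ℝ) (n : ℕ) (c : (ℓ : ℕ) → Fin (Zdim d ℓ) → ℝ) :
    discInner w pts g (S.series n c) =
      ∑ ℓ ∈ range (n + 1), ∑ k, c ℓ k * discInner w pts g (S.Y ℓ k) := by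
  simp only [discInner, series, mul_sum]
  rw [sum_comm]
  refine sum_congr rfl fun ℓ _ => ?_
  rw [sum_comm]
  exact sum_congr rfl fun k _ => sum_congr rfl fun j _ => by ring

section L2

variable {g h : Sph d → ℝ}

lemma innerL2_eq_inner_toLp (hg : MemLp g 2 (sphMeasure d)) (hh : MemLp h 2 (sphMeasure d)) :
    innerL2 d g h = inner ℝ (hg.toLp g) (hh.toLp h) := by
  rw [L2.inner_def]
  refine integral_congr_ae ?_
  filter_upwards [hg.coeFn_toLp, hh.coeFn_toLp] with x hgx hhx
  simp [hgx, hhx, mul_comm]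

lemma l2NormSq_eq_norm_toLp_sq (hg : MemLp g 2 (sphMeasure d)) :
    l2NormSq d g = ‖hg.toLp g‖ ^ 2 := by
  rw [← real_inner_self_eq_norm_sq, ← innerL2_eq_inner_toLp, innerL2, l2NormSq]
  simp only [sq]

lemma l2Norm_eq_norm_toLp (hg : MemLp g 2 (sphMeasure d)) : l2Norm d g = ‖hg.toLp g‖ := by
  rw [l2Norm, l2NormSq_eq_norm_toLp_sq hg, Real.sqrt_sq (norm_nonneg _)]

lemma l2Norm_add_le (hg : MemLp g 2 (sphMeasure d)) (hh : MemLp h 2 (sphMeasure d)) :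
    l2Norm d (fun x => g x + h x) ≤ l2Norm d g + l2Norm d h := by
  change l2Norm d (g + h) ≤ _
  rw [l2Norm_eq_norm_toLp (hg.add hh), MemLp.toLp_add hg hh, l2Norm_eq_norm_toLp hg,
    l2Norm_eq_norm_toLp hh]
  exact norm_add_le _ _

lemma l2Norm_sub_le (hg : MemLp g 2 (sphMeasure d)) (hh : MemLp h 2 (sphMeasure d)) :
    l2Norm d (fun x => g x - h x) ≤ l2Norm d g + l2Norm d h := by
  change l2Norm d (g - h) ≤ _
  rw [l2Norm_eq_norm_toLp (hg.sub hh), MemLp.toLp_sub hg hh, l2Norm_eq_norm_toLp hg,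
    l2Norm_eq_norm_toLp hh]
  exact norm_sub_le _ _

lemma l2NormSq_sub (hg : MemLp g 2 (sphMeasure d)) (hh : MemLp h 2 (sphMeasure d)) :
    l2NormSq d (fun x => g x - h x) = l2NormSq d g - 2 * innerL2 d g h + l2NormSq d h := by
  change l2NormSq d (g - h) = _
  rw [l2NormSq_eq_norm_toLp_sq (hg.sub hh), MemLp.toLp_sub hg hh, norm_sub_sq_real,
    l2NormSq_eq_norm_toLp_sq hg, l2NormSq_eq_norm_toLp_sq hh, innerL2_eq_inner_toLp hg hh]

lemma surfArea_nonneg : 0 ≤ surfArea d := ENNReal.toReal_nonneg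

lemma abs_le_supNorm (hg : Continuous g) (x : Sph d) : |g x| ≤ supNorm d g :=
  le_ciSup (isCompact_range hg.abs).bddAbove x

lemma supNorm_nonneg (g : Sph d → ℝ) : 0 ≤ supNorm d g :=
  Real.iSup_nonneg fun _ => abs_nonneg _

variable [IsFiniteMeasure (sphMeasure d)]

lemma memLp_of_continuous (hg : Continuous g) : MemLp g 2 (sphMeasure d) :=
  hg.memLp_of_hasCompactSupport (.of_compactSpace g)

lemma l2Norm_le_sqrt_surfArea_mul_supNorm (hg : Continuous g) :
    l2Norm d g ≤ √(surfArea d) * supNorm d g := by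
  have hsq : l2NormSq d g ≤ surfArea d * supNorm d g ^ 2 := by
    have hbound : ∀ x, g x ^ 2 ≤ supNorm d g ^ 2 := fun x => by
      rw [← sq_abs]
      exact pow_le_pow_left₀ (abs_nonneg _) (abs_le_supNorm hg x) 2
    calc l2NormSq d g ≤ ∫ _, supNorm d g ^ 2 ∂(sphMeasure d) :=
          integral_mono ((memLp_of_continuous hg).integrable_sq) (integrable_const _) hbound
      _ = surfArea d * supNorm d g ^ 2 := by rw [integral_const, smul_eq_mul, measureReal_def]; rfl
  calc l2Norm d g ≤ √(surfArea d * supNorm d g ^ 2) := Real.sqrt_le_sqrt hsq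
    _ = √(surfArea d) * supNorm d g := by
      rw [Real.sqrt_mul surfArea_nonneg, Real.sqrt_sq (supNorm_nonneg g)]

end L2

section Hyperinterpolation

variable {S : SHSetup d} {n m : ℕ} {w : Fin m → ℝ} {pts : Fin m → Sph d} {η : ℝ}

lemma hyper_eq_series (g : Sph d → ℝ) :
    hyper S n m w pts g = S.series n fun ℓ k => discInner w pts g (S.Y ℓ k) :=
  rfl

lemma continuous_hyper (g : Sph d → ℝ) : Continuous (hyper S n m w pts g) :=
  S.continuous_series n _

lemma inPn_hyper (g : Sph d → ℝ) : inPn S n (hyper S n m w pts g) :=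
  ⟨_, rfl⟩

lemma hyper_sub_apply (g h : Sph d → ℝ) (x : Sph d) :
    hyper S n m w pts (fun y => g y - h y) x = hyper S n m w pts g x - hyper S n m w pts h x := by
  simp only [hyper, mul_sub, sub_mul, sum_sub_distrib]

namespace MZProperty

variable {p : Sph d → ℝ}

lemma discInner_self_le (hMZ : MZProperty S n m w pts η) (hp : inPn S n p) :
    discInner w pts p p ≤ (1 + η) * l2NormSq d p := by
  have := (abs_le.mp (hMZ p hp)).2
  rw [discInner_self, l2NormSq]
  linarith

lemma le_discInner_self (hMZ : MZProperty S n m w pts η) (hp : inPn S n p) :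
    (1 - η) * l2NormSq d p ≤ discInner w pts p p := by
  have := (abs_le.mp (hMZ p hp)).1
  rw [discInner_self, l2NormSq]
  linarith

end MZProperty

variable [IsFiniteMeasure (sphMeasure d)]

lemma integral_hyper_mul {p : Sph d → ℝ} (hp : inPn S n p) (g : Sph d → ℝ) :
    ∫ x, hyper S n m w pts g x * p x ∂(sphMeasure d) = discInner w pts g p := by
  obtain ⟨c, rfl⟩ : ∃ c, p = S.series n c := hp
  rw [hyper_eq_series, S.integral_mul_series (S.continuous_series n _), S.discInner_series]
  refine sum_congr rfl fun ℓ hℓ => sum_congr rfl fun k _ => ?_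
  rw [S.coef_series (Nat.lt_succ_iff.mp (mem_range.mp hℓ)), mul_comm]

lemma l2NormSq_hyper (g : Sph d → ℝ) :
    l2NormSq d (hyper S n m w pts g) = discInner w pts g (hyper S n m w pts g) := by
  rw [l2NormSq, ← integral_hyper_mul (inPn_hyper g) g]
  simp only [sq]

namespace MZProperty

lemma l2NormSq_hyper_le (hMZ : MZProperty S n m w pts η) (hw : ∀ j, 0 ≤ w j) (hη : 0 ≤ η)
    (g : Sph d → ℝ) :
    l2NormSq d (hyper S n m w pts g) ≤ (1 + η) * discInner w pts g g := by
  set U := hyper S n m w pts g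
  have hN : 0 ≤ l2NormSq d U := integral_nonneg fun _ => sq_nonneg _
  have hg := discInner_self_nonneg pts hw g
  have hCS : l2NormSq d U ^ 2 ≤ discInner w pts g g * ((1 + η) * l2NormSq d U) := by
    rw [l2NormSq_hyper g]
    calc discInner w pts g U ^ 2 ≤ discInner w pts g g * discInner w pts U U :=
          discInner_sq_le pts hw g U
      _ ≤ discInner w pts g g * ((1 + η) * discInner w pts g U) := by
          rw [← l2NormSq_hyper g]
          exact mul_le_mul_of_nonneg_left (hMZ.discInner_self_le (inPn_hyper g)) hg
  have hA : 0 ≤ (1 + η) * discInner w pts g g := mul_nonneg (by linarith) hg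
  nlinarith

lemma l2Norm_hyper_le (hMZ : MZProperty S n m w pts η) (hw : ∀ j, 0 ≤ w j) (hη : 0 ≤ η)
    (hsum : ∑ j, w j = surfArea d) {g : Sph d → ℝ} (hg : Continuous g) :
    l2Norm d (hyper S n m w pts g) ≤ √(1 + η) * √(surfArea d) * supNorm d g := by
  have hdisc := discInner_self_le_of_abs_le pts hw (abs_le_supNorm hg)
  rw [hsum] at hdisc
  calc l2Norm d (hyper S n m w pts g) ≤ √((1 + η) * (surfArea d * supNorm d g ^ 2)) :=
        Real.sqrt_le_sqrt ((hMZ.l2NormSq_hyper_le hw hη g).trans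
          (mul_le_mul_of_nonneg_left hdisc (by linarith)))
    _ = √(1 + η) * √(surfArea d) * supNorm d g := by
        rw [Real.sqrt_mul (by linarith), Real.sqrt_mul surfArea_nonneg,
          Real.sqrt_sq (supNorm_nonneg g), mul_assoc]

lemma l2Norm_hyper_sub_self_le (hMZ : MZProperty S n m w pts η) (hw : ∀ j, 0 ≤ w j)
    (hη : 0 ≤ η) {p : Sph d → ℝ} (hp : inPn S n p) :
    l2Norm d (fun x => hyper S n m w pts p x - p x) ≤ √(η ^ 2 + 4 * η) * l2Norm d p := by
  have hU := hMZ.l2NormSq_hyper_le hw hη p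
  have hupper := mul_le_mul_of_nonneg_left (hMZ.discInner_self_le hp) (by linarith : 0 ≤ 1 + η)
  have hlower := hMZ.le_discInner_self hp
  have hsq : l2NormSq d (fun x => hyper S n m w pts p x - p x) ≤
      (η ^ 2 + 4 * η) * l2NormSq d p := by
    rw [l2NormSq_sub (memLp_of_continuous (continuous_hyper p))
      (memLp_of_continuous (S.continuous_of_inPn hp)), innerL2, integral_hyper_mul hp]
    linarith
  rw [l2Norm, l2Norm, ← Real.sqrt_mul (by positivity)]
  exact Real.sqrt_le_sqrt hsq

end MZProperty

end Hyperinterpolation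

theorem statement7_general (d : ℕ) (hd : 2 ≤ d) (S : SHSetup d)
    (f : Sph d → ℝ) (hf : Continuous f)
    (n m : ℕ) (w : Fin m → ℝ) (hw : ∀ j, 0 < w j) (pts : Fin m → Sph d)
    (hsum : (∑ j, w j) = surfArea d)
    (η : ℝ) (hη0 : 0 ≤ η) (hMZ : MZProperty S n m w pts η)
    (χstar : Sph d → ℝ) (hχP : inPn S n χstar)
    (hχbest : supNorm d (fun x => f x - χstar x) = bestUnifErr S n f) :
    l2Norm d (hyper S n m w pts f) ≤
      Real.sqrt (1 + η) * Real.sqrt (surfArea d) * supNorm d f ∧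
    l2Norm d (fun x => hyper S n m w pts f x - f x) ≤
      (Real.sqrt (1 + η) + 1) * Real.sqrt (surfArea d) * bestUnifErr S n f +
        Real.sqrt (η ^ 2 + 4 * η) * l2Norm d χstar := by
  have := S.isFiniteMeasure_sphMeasure hd
  have hw' : ∀ j, 0 ≤ w j := fun j => (hw j).le
  refine ⟨hMZ.l2Norm_hyper_le hw' hη0 hsum hf, ?_⟩
  set e := fun x => f x - χstar x
  set U := hyper S n m w pts
  have he : Continuous e := hf.sub (S.continuous_of_inPn hχP)
  have hD : Continuous fun x => U χstar x - χstar x :=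
    (continuous_hyper χstar).sub (S.continuous_of_inPn hχP)
  have hsplit : (fun x => U f x - f x) = fun x => (U e x + (U χstar x - χstar x)) - e x :=
    funext fun x => by simp only [e, U, hyper_sub_apply]; ring
  rw [hsplit, ← hχbest]
  calc _ ≤ l2Norm d (fun x => U e x + (U χstar x - χstar x)) + l2Norm d e :=
        l2Norm_sub_le (memLp_of_continuous ((continuous_hyper e).add hD)) (memLp_of_continuous he)
    _ ≤ l2Norm d (U e) + l2Norm d (fun x => U χstar x - χstar x) + l2Norm d e := by
        gcongr
        exact l2Norm_add_le (memLp_of_continuous (continuous_hyper e)) (memLp_of_continuous hD)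
    _ ≤ √(1 + η) * √(surfArea d) * supNorm d e + √(η ^ 2 + 4 * η) * l2Norm d χstar +
          √(surfArea d) * supNorm d e := by
        gcongr
        · exact hMZ.l2Norm_hyper_le hw' hη0 hsum he
        · exact hMZ.l2Norm_hyper_sub_self_le hw' hη0 hχP
        · exact l2Norm_le_sqrt_surfArea_mul_supNorm he
    _ = _ := by ring

/-- if the positive-weight quadrature rule satisfies the
Marcinkiewicz–Zygmund property with constant `η ∈ [0,1)` for degree `n` and integrates
constants exactly (`Σ_j w_j = |S^d|`), then for `f ∈ C(S^d)`:
`‖U_n f‖_{L²} ≤ √(1+η)|S^d|^{1/2}‖f‖_∞` and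
`‖U_n f − f‖_{L²} ≤ (√(1+η)+1)|S^d|^{1/2} E_n(f) + √(η²+4η)‖χ*‖_{L²}`. -/
theorem statement7 (d : ℕ) (hd : 2 ≤ d) (S : SHSetup d)
    (f : Sph d → ℝ) (hf : Continuous f)
    (n m : ℕ) (w : Fin m → ℝ) (hw : ∀ j, 0 < w j) (pts : Fin m → Sph d)
    (hsum : (∑ j, w j) = surfArea d)
    (η : ℝ) (hη0 : 0 ≤ η) (hη1 : η < 1) (hMZ : MZProperty S n m w pts η)
    (χstar : Sph d → ℝ) (hχP : inPn S n χstar)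
    (hχbest : supNorm d (fun x => f x - χstar x) = bestUnifErr S n f) :
    l2Norm d (hyper S n m w pts f) ≤
      Real.sqrt (1 + η) * Real.sqrt (surfArea d) * supNorm d f ∧
    l2Norm d (fun x => hyper S n m w pts f x - f x) ≤
      (Real.sqrt (1 + η) + 1) * Real.sqrt (surfArea d) * bestUnifErr S n f +
        Real.sqrt (η ^ 2 + 4 * η) * l2Norm d χstar :=
  statement7_general d hd S f hf n m w hw pts hsum η hη0 hMZ χstar hχP hχbest
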